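/- arXiv:0802.2184 — 3 statements merged into one kernel-verified Lean document; each statement's English description precedes it below -/
import Mathlib

section
/- For every real p ≠ 0, every greedy cover φ' of a set cover instance and every cover φ of the same instance satisfy M_p(φ) ≤ (n^{p+1} / ∑_{j=1}^{n} j^p)^{1/p} · M_p(φ'). In other words, the greedy algorithm approximates the maximum p-mean set cover problem within a factor of (n^{p+1}/∑_{j=1}^n j^p)^{1/p}. -/
open Finset

/-- A set cover instance: a collection of subsets of a finite ground set `V` whose union is `V`. -/
structure SetCoverInstance (V : Type*) [Fintype V] [DecidableEq V] where
  sets : Finset (Finset V)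
  covers : ∀ v : V, ∃ S ∈ sets, v ∈ S

/-- A cover: an assignment of each element to a subset of the collection containing it. -/
structure Cover {V : Type*} [Fintype V] [DecidableEq V] (I : SetCoverInstance V) where
  φ : V → Finset V
  mem_sets : ∀ v, φ v ∈ I.sets
  self_mem : ∀ v, v ∈ φ v

variable {V : Type*} [Fintype V] [DecidableEq V] {I : SetCoverInstance V}

/-- `a_v`: the size of the part containing `v`. -/
def Cover.a (c : Cover I) (v : V) : ℕ :=
  (Finset.univ.filter fun w => c.φ w = c.φ v).card

/-- `c_i`: the size of the part assigned to subset `S`. -/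
def Cover.partSize (c : Cover I) (S : Finset V) : ℕ :=
  (Finset.univ.filter fun w => c.φ w = S).card

/-- A greedy cover: its parts can be ordered `P 0, …, P (m-1)` so that each `P j` is obtained by
choosing a subset covering a maximum number of yet-uncovered elements. -/
def Cover.IsGreedy (c : Cover I) : Prop :=
  ∃ (m : ℕ) (P : ℕ → Finset V),
    (∀ v : V, ∃ j < m, v ∈ P j) ∧
    (∀ j < m, ∃ S ∈ I.sets,
      P j = S \ (Finset.range j).biUnion P ∧
      ∀ T ∈ I.sets, (T \ (Finset.range j).biUnion P).card ≤ (P j).card) ∧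
    (∀ j < m, ∀ v ∈ P j, (Finset.univ.filter fun w => c.φ w = c.φ v) = P j)

/-- The generalized `p`-mean of the part sizes `a_v`, over the elements. -/
noncomputable def Cover.pMean (c : Cover I) (p : ℝ) : ℝ :=
  ((1 / (Fintype.card V : ℝ)) * ∑ v : V, (c.a v : ℝ) ^ p) ^ (1 / p)

/-!
Fix a part `Q` of `c` and order its elements by the stage at which the greedy algorithm covers
them. If `r` elements of `Q` are covered at the stage of `v` or later, then at that stage the set
of `c` containing `Q` still has `r` uncovered elements, so the greedy part of `v` has size at
least `r`. Hence, for `p > 0`, the contribution `|Q|^(p+1)` of `Q` to `∑ a_v^p` is matched by at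
least `∑_{r ≤ |Q|} r^p` in `∑ a'_v^p`, and the factor `|Q|^(p+1) / ∑_{r ≤ |Q|} r^p` is at most
its value at `|Q| = n` because `k ↦ k^(p+1) / ∑_{r ≤ k} r^p` increases. For `p < 0` every
inequality reverses, and `x ↦ x^(1/p)` reverses it back. The monotonicity of that ratio is a
mediant argument: `k^(p+1)` is the sum of the increments `(r+1)^(p+1) - r^(p+1)`, whose ratios to
`(r+1)^p` are secant slopes of `x ↦ x^(p+1)` through `1`, monotone by convexity (concavity for
`-1 < p < 0`; for `p ≤ -1` numerator and denominator both move the right way).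
-/

open Real

theorem monotone_sum_range_div_sum_range {d s : ℕ → ℝ} (hs : ∀ j, 0 < s j)
    (h : Monotone fun j => d j / s j) :
    Monotone fun k => (∑ j ∈ range (k + 1), d j) / ∑ j ∈ range (k + 1), s j := by
  refine monotone_nat_of_le_succ fun k => ?_
  set D := ∑ j ∈ range (k + 1), d j
  set S := ∑ j ∈ range (k + 1), s j
  have hS : 0 < S := sum_pos (fun j _ => hs j) nonempty_range_add_one
  have hk := hs (k + 1)
  have hD : D ≤ d (k + 1) / s (k + 1) * S := by
    rw [mul_sum]
    refine sum_le_sum fun j hj => ?_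
    rw [← div_le_iff₀ (hs j)]
    exact h (mem_range.1 hj).le
  rw [div_mul_eq_mul_div, le_div_iff₀ hk] at hD
  simp only [sum_range_succ _ (k + 1)]
  rw [div_le_div_iff₀ hS (by positivity)]
  linarith

theorem ConvexOn.monotone_secant_div_succ {f : ℝ → ℝ} (hf : ConvexOn ℝ (Set.Ici 0) f) :
    Monotone fun j : ℕ => (f (j / (j + 1)) - f 1) / (j / (j + 1) - 1) := by
  intro i j hij
  have hi : (i : ℝ) / (i + 1) < 1 := (div_lt_one (by positivity)).2 (by linarith)
  have hj : (j : ℝ) / (j + 1) < 1 := (div_lt_one (by positivity)).2 (by linarith)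
  refine hf.secant_mono (Set.mem_Ici.2 zero_le_one) (Set.mem_Ici.2 (by positivity))
    (Set.mem_Ici.2 (by positivity)) hi.ne hj.ne ?_
  rw [div_le_div_iff₀ (by positivity) (by positivity)]
  have : (i : ℝ) ≤ j := by exact_mod_cast hij
  nlinarith

theorem rpow_add_one_sub_rpow_div_rpow_eq_slope (p : ℝ) {x : ℝ} (hx : 0 ≤ x) :
    ((x + 1) ^ (p + 1) - x ^ (p + 1)) / (x + 1) ^ p =
      ((x / (x + 1)) ^ (p + 1) - 1 ^ (p + 1)) / (x / (x + 1) - 1) := by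
  have hx1 : 0 < x + 1 := by linarith
  rw [div_rpow hx hx1.le, one_rpow, rpow_add_one hx1.ne']
  have : (x + 1) ^ p ≠ 0 := (rpow_pos_of_pos hx1 p).ne'
  field_simp
  ring

noncomputable def powSum (p : ℝ) (k : ℕ) : ℝ := ∑ j ∈ Icc 1 k, (j : ℝ) ^ p

theorem powSum_pos (p : ℝ) {k : ℕ} (hk : 1 ≤ k) : 0 < powSum p k :=
  sum_pos (fun j hj => rpow_pos_of_pos (Nat.cast_pos.2 (mem_Icc.1 hj).1) p) ⟨1, by simp [hk]⟩

theorem powSum_mono (p : ℝ) : Monotone (powSum p) := fun _ _ hab =>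
  sum_le_sum_of_subset_of_nonneg (Icc_subset_Icc_right hab) fun _ _ _ =>
    rpow_nonneg (Nat.cast_nonneg _) _

theorem sum_range_add_one_rpow_eq_powSum (p : ℝ) (k : ℕ) :
    ∑ j ∈ range k, ((j : ℝ) + 1) ^ p = powSum p k := by
  induction k with
  | zero => simp [powSum]
  | succ k ih =>
    rw [sum_range_succ, ih, powSum, powSum, sum_Icc_succ_top (by omega)]
    push_cast
    rfl

theorem sum_range_rpow_add_one_sub_rpow {q : ℝ} (hq : q ≠ 0) (k : ℕ) :
    ∑ j ∈ range k, (((j : ℝ) + 1) ^ q - (j : ℝ) ^ q) = (k : ℝ) ^ q := by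
  have := sum_range_sub (fun j : ℕ => (j : ℝ) ^ q) k
  push_cast at this
  rwa [zero_rpow hq, sub_zero] at this

theorem monotone_rpow_div_powSum {p : ℝ} (hp : 0 ≤ p) :
    Monotone fun k : ℕ => ((k : ℝ) + 1) ^ (p + 1) / powSum p (k + 1) := by
  have h := monotone_sum_range_div_sum_range
    (d := fun j : ℕ => ((j : ℝ) + 1) ^ (p + 1) - (j : ℝ) ^ (p + 1))
    (s := fun j : ℕ => ((j : ℝ) + 1) ^ p) (fun j => rpow_pos_of_pos (by positivity) p) ?_
  · simpa only [sum_range_rpow_add_one_sub_rpow (by linarith : p + 1 ≠ 0),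
      sum_range_add_one_rpow_eq_powSum, Nat.cast_add, Nat.cast_one] using h
  simp only [rpow_add_one_sub_rpow_div_rpow_eq_slope p (Nat.cast_nonneg _)]
  exact (convexOn_rpow (by linarith)).monotone_secant_div_succ

theorem antitone_rpow_div_powSum {p : ℝ} (hp₁ : -1 < p) (hp₀ : p ≤ 0) :
    Antitone fun k : ℕ => ((k : ℝ) + 1) ^ (p + 1) / powSum p (k + 1) := by
  have h := monotone_sum_range_div_sum_range
    (d := fun j : ℕ => -(((j : ℝ) + 1) ^ (p + 1) - (j : ℝ) ^ (p + 1)))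
    (s := fun j : ℕ => ((j : ℝ) + 1) ^ p) (fun j => rpow_pos_of_pos (by positivity) p) ?_
  · simp only [sum_neg_distrib, sum_range_rpow_add_one_sub_rpow (by linarith : p + 1 ≠ 0),
      sum_range_add_one_rpow_eq_powSum, neg_div, Nat.cast_add, Nat.cast_one] at h
    exact fun a b hab => neg_le_neg_iff.1 (h hab)
  simp only [neg_div, rpow_add_one_sub_rpow_div_rpow_eq_slope p (Nat.cast_nonneg _)]
  have := (concaveOn_rpow (p := p + 1) (by linarith) (by linarith)).neg.monotone_secant_div_succ
  simpa only [Pi.neg_apply, ← neg_sub', neg_div] using this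

section Ratio

variable {p : ℝ} {a n : ℕ}

theorem rpow_div_powSum_le_of_nonneg (hp : 0 ≤ p) (ha : 1 ≤ a) (han : a ≤ n) :
    (a : ℝ) ^ (p + 1) / powSum p a ≤ (n : ℝ) ^ (p + 1) / powSum p n := by
  obtain ⟨a, rfl⟩ := Nat.exists_eq_add_of_le' ha
  obtain ⟨n, rfl⟩ := Nat.exists_eq_add_of_le' (ha.trans han)
  exact_mod_cast monotone_rpow_div_powSum hp (by omega : a ≤ n)

theorem rpow_div_powSum_le_of_nonpos (hp : p ≤ 0) (ha : 1 ≤ a) (han : a ≤ n) :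
    (n : ℝ) ^ (p + 1) / powSum p n ≤ (a : ℝ) ^ (p + 1) / powSum p a := by
  rcases le_or_gt p (-1) with hp₁ | hp₁
  · have ha' : (0 : ℝ) < a := by exact_mod_cast ha
    exact div_le_div₀ (rpow_nonneg ha'.le _)
      (rpow_le_rpow_of_nonpos ha' (by exact_mod_cast han) (by linarith))
      (powSum_pos p ha) (powSum_mono p han)
  obtain ⟨a, rfl⟩ := Nat.exists_eq_add_of_le' ha
  obtain ⟨n, rfl⟩ := Nat.exists_eq_add_of_le' (ha.trans han)
  exact_mod_cast antitone_rpow_div_powSum hp₁ hp (by omega : a ≤ n)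

end Ratio

section Rank

variable {α : Type*} [DecidableEq α] {t g : α → ℕ} {Q : Finset α}

theorem sum_Icc_card_le_sum_of_card_filter_le {F : ℕ → ℝ} (hF : MonotoneOn F (Set.Ici 1))
    (hQ : ∀ v ∈ Q, #{w ∈ Q | t v ≤ t w} ≤ g v) :
    ∑ r ∈ Icc 1 #Q, F r ≤ ∑ v ∈ Q, F (g v) := by
  induction Q using Finset.induction_on_min_value t with
  | empty => simp
  | insert a Q ha hmin ih =>
    have hQ' : ∀ v ∈ Q, #{w ∈ Q | t v ≤ t w} ≤ g v := fun v hv =>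
      (card_le_card (filter_subset_filter _ (subset_insert a Q))).trans
        (hQ v (mem_insert_of_mem hv))
    have hga : #Q + 1 ≤ g a := by
      have := hQ a (mem_insert_self a Q)
      rwa [filter_true_of_mem fun w hw => (mem_insert.1 hw).elim (fun h => h ▸ le_rfl) (hmin w),
        card_insert_of_notMem ha] at this
    rw [card_insert_of_notMem ha, sum_Icc_succ_top (by omega), sum_insert ha, add_comm (F (g a))]
    exact add_le_add (ih hQ') (hF (by simp) (by simp; omega) hga)

theorem sum_le_sum_Icc_card_of_card_filter_le {F : ℕ → ℝ} (hF : AntitoneOn F (Set.Ici 1))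
    (hQ : ∀ v ∈ Q, #{w ∈ Q | t v ≤ t w} ≤ g v) :
    ∑ v ∈ Q, F (g v) ≤ ∑ r ∈ Icc 1 #Q, F r := by
  simpa using sum_Icc_card_le_sum_of_card_filter_le hF.neg hQ

variable {p : ℝ} {n : ℕ}

theorem card_rpow_le_mul_sum_rpow_of_nonneg (hp : 0 ≤ p) (hQ : Q.Nonempty) (hQn : #Q ≤ n)
    (hrank : ∀ v ∈ Q, #{w ∈ Q | t v ≤ t w} ≤ g v) :
    (#Q : ℝ) ^ (p + 1) ≤ (n : ℝ) ^ (p + 1) / powSum p n * ∑ v ∈ Q, (g v : ℝ) ^ p := by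
  have hQ₁ : 1 ≤ #Q := hQ.card_pos
  have hS := powSum_pos p hQ₁
  have hK : 0 ≤ (n : ℝ) ^ (p + 1) / powSum p n :=
    div_nonneg (by positivity) (powSum_pos p (hQ₁.trans hQn)).le
  calc (#Q : ℝ) ^ (p + 1) = (#Q : ℝ) ^ (p + 1) / powSum p #Q * powSum p #Q := by field_simp
    _ ≤ (n : ℝ) ^ (p + 1) / powSum p n * powSum p #Q :=
      mul_le_mul_of_nonneg_right (rpow_div_powSum_le_of_nonneg hp hQ₁ hQn) hS.le
    _ ≤ _ := by
      refine mul_le_mul_of_nonneg_left ?_ hK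
      refine sum_Icc_card_le_sum_of_card_filter_le (F := fun r : ℕ => (r : ℝ) ^ p) ?_ hrank
      exact fun i _ j _ hij => rpow_le_rpow (Nat.cast_nonneg _) (Nat.cast_le.2 hij) hp

theorem mul_sum_rpow_le_card_rpow_of_nonpos (hp : p ≤ 0) (hQ : Q.Nonempty) (hQn : #Q ≤ n)
    (hrank : ∀ v ∈ Q, #{w ∈ Q | t v ≤ t w} ≤ g v) :
    (n : ℝ) ^ (p + 1) / powSum p n * ∑ v ∈ Q, (g v : ℝ) ^ p ≤ (#Q : ℝ) ^ (p + 1) := by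
  have hQ₁ : 1 ≤ #Q := hQ.card_pos
  have hS := powSum_pos p hQ₁
  have hK : 0 ≤ (n : ℝ) ^ (p + 1) / powSum p n :=
    div_nonneg (by positivity) (powSum_pos p (hQ₁.trans hQn)).le
  calc
    _ ≤ (n : ℝ) ^ (p + 1) / powSum p n * powSum p #Q := by
      refine mul_le_mul_of_nonneg_left ?_ hK
      refine sum_le_sum_Icc_card_of_card_filter_le (F := fun r : ℕ => (r : ℝ) ^ p) ?_ hrank
      exact fun i hi j _ hij => rpow_le_rpow_of_nonpos (Nat.cast_pos.2 hi) (Nat.cast_le.2 hij) hp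
    _ ≤ (#Q : ℝ) ^ (p + 1) / powSum p #Q * powSum p #Q :=
      mul_le_mul_of_nonneg_right (rpow_div_powSum_le_of_nonpos hp hQ₁ hQn) hS.le
    _ = (#Q : ℝ) ^ (p + 1) := by field_simp

end Rank

theorem Cover.a_pos (c : Cover I) (v : V) : 0 < c.a v :=
  card_pos.2 ⟨v, mem_filter.2 ⟨mem_univ v, rfl⟩⟩

theorem Cover.IsGreedy.exists_stage {c : Cover I} (hc : c.IsGreedy) :
    ∃ t : V → ℕ, ∀ v, ∀ S ∈ I.sets, #{w ∈ S | t v ≤ t w} ≤ c.a v := by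
  obtain ⟨m, P, hcov, hgreedy, hpart⟩ := hc
  choose t ht hmem using hcov
  have hnotMem : ∀ w, ∀ i < t w, w ∉ P i := by
    intro w i hi hw
    obtain ⟨_, _, hP, -⟩ := hgreedy (t w) (ht w)
    have := hmem w
    rw [hP, mem_sdiff] at this
    exact this.2 (mem_biUnion.2 ⟨i, mem_range.2 hi, hw⟩)
  refine ⟨t, fun v S hS => ?_⟩
  obtain ⟨-, -, -, hmax⟩ := hgreedy (t v) (ht v)
  rw [Cover.a, hpart (t v) (ht v) v (hmem v)]
  refine (card_le_card fun w hw => ?_).trans (hmax S hS)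
  rw [mem_filter] at hw
  refine mem_sdiff.2 ⟨hw.1, fun h => ?_⟩
  obtain ⟨i, hi, hwi⟩ := mem_biUnion.1 h
  exact hnotMem w i ((mem_range.1 hi).trans_le hw.2) hwi

namespace Cover

variable (c c' : Cover I) {t : V → ℕ}

theorem sum_rpow_a (p : ℝ) :
    ∑ v, (c.a v : ℝ) ^ p = ∑ S ∈ univ.image c.φ, (c.partSize S : ℝ) ^ (p + 1) := by
  rw [← sum_fiberwise_of_maps_to (g := c.φ) fun v _ => mem_image_of_mem _ (mem_univ v)]
  refine sum_congr rfl fun S hS => ?_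
  obtain ⟨u, -, rfl⟩ := mem_image.1 hS
  have hu : ∀ v ∈ univ.filter (c.φ · = c.φ u), c.a v = c.a u := fun v hv => by
    simp only [Cover.a, (mem_filter.1 hv).2]
  change _ = (c.a u : ℝ) ^ (p + 1)
  rw [sum_congr rfl fun v hv => by rw [hu v hv], sum_const, nsmul_eq_mul,
    rpow_add_one (Nat.cast_pos.2 (c.a_pos u)).ne', mul_comm]
  rfl

theorem card_filter_part_le {g : V → ℕ} (ht : ∀ v, ∀ S ∈ I.sets, #{w ∈ S | t v ≤ t w} ≤ g v)
    (u : V) :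
    ∀ v ∈ univ.filter (c.φ · = c.φ u), #{w ∈ univ.filter (c.φ · = c.φ u) | t v ≤ t w} ≤ g v :=
  fun v _ => (card_le_card (filter_subset_filter _ fun w hw =>
    (mem_filter.1 hw).2 ▸ c.self_mem w)).trans (ht v _ (c.mem_sets u))

theorem sum_rpow_a_le_of_nonneg {p : ℝ} (hp : 0 ≤ p)
    (ht : ∀ v, ∀ S ∈ I.sets, #{w ∈ S | t v ≤ t w} ≤ c'.a v) :
    ∑ v, (c.a v : ℝ) ^ p ≤
      (Fintype.card V : ℝ) ^ (p + 1) / powSum p (Fintype.card V) * ∑ v, (c'.a v : ℝ) ^ p := by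
  rw [c.sum_rpow_a, ← sum_fiberwise_of_maps_to (g := c.φ) fun v _ =>
    mem_image_of_mem _ (mem_univ v), mul_sum]
  refine sum_le_sum fun S hS => ?_
  obtain ⟨u, -, rfl⟩ := mem_image.1 hS
  exact card_rpow_le_mul_sum_rpow_of_nonneg hp ⟨u, by simp⟩ (card_le_univ _)
    (c.card_filter_part_le ht u)

theorem mul_sum_rpow_a_le_of_nonpos {p : ℝ} (hp : p ≤ 0)
    (ht : ∀ v, ∀ S ∈ I.sets, #{w ∈ S | t v ≤ t w} ≤ c'.a v) :
    (Fintype.card V : ℝ) ^ (p + 1) / powSum p (Fintype.card V) * ∑ v, (c'.a v : ℝ) ^ p ≤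
      ∑ v, (c.a v : ℝ) ^ p := by
  rw [c.sum_rpow_a, ← sum_fiberwise_of_maps_to (g := c.φ) fun v _ =>
    mem_image_of_mem _ (mem_univ v), mul_sum]
  refine sum_le_sum fun S hS => ?_
  obtain ⟨u, -, rfl⟩ := mem_image.1 hS
  exact mul_sum_rpow_le_card_rpow_of_nonpos hp ⟨u, by simp⟩ (card_le_univ _)
    (c.card_filter_part_le ht u)

theorem pMean_le_of_pos {p K : ℝ} (hp : 0 < p) (hK : 0 ≤ K)
    (h : ∑ v, (c.a v : ℝ) ^ p ≤ K * ∑ v, (c'.a v : ℝ) ^ p) :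
    c.pMean p ≤ K ^ (1 / p) * c'.pMean p := by
  rw [pMean, pMean, ← mul_rpow hK (by positivity)]
  refine rpow_le_rpow (by positivity) ?_ (by positivity)
  rw [mul_left_comm]
  exact mul_le_mul_of_nonneg_left h (by positivity)

theorem pMean_le_of_neg [Nonempty V] {p K : ℝ} (hp : p < 0) (hK : 0 < K)
    (h : K * ∑ v, (c'.a v : ℝ) ^ p ≤ ∑ v, (c.a v : ℝ) ^ p) :
    c.pMean p ≤ K ^ (1 / p) * c'.pMean p := by
  have hY : 0 < ∑ v, (c'.a v : ℝ) ^ p :=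
    sum_pos (fun v _ => rpow_pos_of_pos (Nat.cast_pos.2 (c'.a_pos v)) p) univ_nonempty
  rw [pMean, pMean, ← mul_rpow hK.le (by positivity)]
  refine rpow_le_rpow_of_nonpos (by positivity) ?_ (one_div_neg.2 hp).le
  rw [mul_left_comm]
  exact mul_le_mul_of_nonneg_left h (by positivity)

end Cover

/-- for every `p ≠ 0`, every greedy cover `c'` and every cover `c`,
`M_p(c) ≤ (n^{p+1} / ∑_{j=1}^n j^p)^{1/p} · M_p(c')`. -/
theorem greedy_pMean_approx (p : ℝ) (hp : p ≠ 0)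
    (c' : Cover I) (hc' : c'.IsGreedy) (c : Cover I) :
    c.pMean p ≤
      ((Fintype.card V : ℝ) ^ (p + 1) /
          ∑ j ∈ Finset.Icc 1 (Fintype.card V), (j : ℝ) ^ p) ^ (1 / p) *
        c'.pMean p := by
  obtain ⟨t, ht⟩ := hc'.exists_stage
  rcases isEmpty_or_nonempty V with _ | _
  · simp [Cover.pMean, zero_rpow (inv_ne_zero hp)]
  have hK : 0 < (Fintype.card V : ℝ) ^ (p + 1) / powSum p (Fintype.card V) :=
    div_pos (rpow_pos_of_pos (Nat.cast_pos.2 Fintype.card_pos) _) (powSum_pos p Fintype.card_pos)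
  rcases hp.lt_or_gt with hp | hp
  · exact c.pMean_le_of_neg c' hp hK (c.mul_sum_rpow_a_le_of_nonpos c' hp.le ht)
  · exact c.pMean_le_of_pos c' hp hK.le (c.sum_rpow_a_le_of_nonneg c' hp.le ht)
end

section
/- For every real p > 0, every greedy cover φ' of a set cover instance and every cover φ of the same instance satisfy M_p(φ) ≤ (p+1)^{1/p} · M_p(φ'). In other words, the greedy algorithm approximates the maximum p-mean set cover problem within a factor of (p+1)^{1/p}. -/
/-!
Number the greedy parts in the order in which they were chosen, and let `stage v` be the number of
the part containing `v`. When that part was chosen, every element of a set `T` with stage at least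
`stage v` was still uncovered, so there are at most `a'_v` of them. In a part `Q` of an arbitrary
cover, the elements ranked by decreasing stage therefore have `a'_v ≥ 1, 2, …, |Q|`, whence
`∑_{v ∈ Q} a'_v ^ p ≥ ∑_{k ≤ |Q|} k ^ p ≥ ∫₀^{|Q|} x ^ p dx = |Q| ^ (p + 1) / (p + 1)`.
Summing over the parts gives `∑ a_v ^ p ≤ (p + 1) ∑ a'_v ^ p`.
-/

open Finset

variable {V : Type*} [Fintype V] [DecidableEq V] {I : SetCoverInstance V}

theorem rpow_add_one_div_le_sum_range {p : ℝ} (hp : 0 ≤ p) (n : ℕ) :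
    (n : ℝ) ^ (p + 1) / (p + 1) ≤ ∑ i ∈ range n, ((i : ℝ) + 1) ^ p := by
  have hmono : MonotoneOn (fun x : ℝ => x ^ p) (Set.Icc 0 (0 + n)) :=
    fun x hx _ _ hxy => Real.rpow_le_rpow hx.1 hxy hp
  have h := hmono.integral_le_sum
  rw [integral_rpow (Or.inl (by linarith)), Real.zero_rpow (by linarith)] at h
  simpa using h

theorem Finset.sum_range_le_sum_card_filter_le {α β M : Type*} [DecidableEq α] [LinearOrder β]
    [AddCommMonoid M] [PartialOrder M] [IsOrderedAddMonoid M] {g : ℕ → M} (hg : Monotone g)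
    (f : α → β) (s : Finset α) :
    ∑ i ∈ range #s, g (i + 1) ≤ ∑ a ∈ s, g #{b ∈ s | f a ≤ f b} := by
  induction s using Finset.induction_on_min_value f with
  | empty => simp
  | insert a s has hmin ih =>
    have hcard : #{b ∈ insert a s | f a ≤ f b} = #s + 1 := by
      rw [filter_true_of_mem (by simpa using hmin), card_insert_of_notMem has]
    rw [card_insert_of_notMem has, sum_range_succ, sum_insert has, hcard, add_comm]
    refine add_le_add le_rfl (ih.trans (sum_le_sum fun x _ => hg (card_le_card ?_)))
    exact filter_subset_filter _ (subset_insert a s)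

theorem card_rpow_add_one_le {α β : Type*} [DecidableEq α] [LinearOrder β] {p : ℝ} (hp : 0 ≤ p)
    (s : Finset α) (f : α → β) (g : α → ℕ) (hg : ∀ a ∈ s, #{b ∈ s | f a ≤ f b} ≤ g a) :
    (#s : ℝ) ^ (p + 1) ≤ (p + 1) * ∑ a ∈ s, (g a : ℝ) ^ p := by
  have hmono : Monotone fun k : ℕ => (k : ℝ) ^ p :=
    fun _ _ hkl => Real.rpow_le_rpow (by positivity) (by exact_mod_cast hkl) hp
  rw [← div_le_iff₀' (by linarith)]
  calc (#s : ℝ) ^ (p + 1) / (p + 1)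
      ≤ ∑ i ∈ range #s, ((i : ℝ) + 1) ^ p := rpow_add_one_div_le_sum_range hp _
    _ ≤ ∑ a ∈ s, (#{b ∈ s | f a ≤ f b} : ℝ) ^ p := by
        simpa using sum_range_le_sum_card_filter_le hmono f s
    _ ≤ ∑ a ∈ s, (g a : ℝ) ^ p := sum_le_sum fun a ha => hmono (hg a ha)

theorem Cover.IsGreedy.exists_stage_s6 {c' : Cover I} (hc' : c'.IsGreedy) :
    ∃ stage : V → ℕ, ∀ T ∈ I.sets, ∀ v, #{w ∈ T | stage v ≤ stage w} ≤ c'.a v := by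
  obtain ⟨m, P, hcov, hgreedy, hpart⟩ := hc'
  refine ⟨fun v => Nat.find (hcov v), fun T hT v => ?_⟩
  obtain ⟨hvm, hvP⟩ := Nat.find_spec (hcov v)
  obtain ⟨-, -, -, hmax⟩ := hgreedy _ hvm
  have hsub : {w ∈ T | Nat.find (hcov v) ≤ Nat.find (hcov w)}
      ⊆ T \ (range (Nat.find (hcov v))).biUnion P := by
    intro w hw
    rw [mem_filter] at hw
    simp only [mem_sdiff, mem_biUnion, mem_range, not_exists, not_and]
    exact ⟨hw.1, fun i hi hwi =>
      Nat.find_min (hcov w) (hi.trans_le hw.2) ⟨hi.trans hvm, hwi⟩⟩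
  rw [Cover.a, hpart _ hvm v hvP]
  exact (card_le_card hsub).trans (hmax T hT)

theorem Cover.IsGreedy.sum_rpow_a_le {c' : Cover I} (hc' : c'.IsGreedy) {p : ℝ} (hp : 0 ≤ p)
    (c : Cover I) : ∑ v, (c.a v : ℝ) ^ p ≤ (p + 1) * ∑ v, (c'.a v : ℝ) ^ p := by
  obtain ⟨stage, hstage⟩ := hc'.exists_stage_s6
  rw [← sum_fiberwise univ c.φ, ← sum_fiberwise univ c.φ, mul_sum]
  refine sum_le_sum fun S _ => ?_
  have hfiber : ∑ v with c.φ v = S, (c.a v : ℝ) ^ p = (c.partSize S : ℝ) ^ (p + 1) := by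
    rw [Cover.partSize, sum_congr rfl fun v hv => by rw [Cover.a, (mem_filter.mp hv).2],
      sum_const, nsmul_eq_mul, Real.rpow_add_one' (by positivity) (by linarith), mul_comm]
  rw [hfiber]
  refine card_rpow_add_one_le hp _ stage _ fun v hv => ?_
  have hvS : c.φ v = S := (mem_filter.mp hv).2
  refine (card_le_card fun w hw => ?_).trans (hstage (c.φ v) (c.mem_sets v) v)
  simp only [mem_filter, mem_univ, true_and] at hw ⊢
  exact ⟨hvS ▸ hw.1 ▸ c.self_mem w, hw.2⟩

theorem Cover.pMean_le_of_sum_rpow_le {c c' : Cover I} {p K : ℝ} (hp : 0 < p) (hK : 0 ≤ K)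
    (h : ∑ v, (c.a v : ℝ) ^ p ≤ K * ∑ v, (c'.a v : ℝ) ^ p) :
    c.pMean p ≤ K ^ (1 / p) * c'.pMean p := by
  unfold Cover.pMean
  rw [← Real.mul_rpow hK (by positivity)]
  refine Real.rpow_le_rpow (by positivity) ?_ (by positivity)
  rw [mul_left_comm]
  exact mul_le_mul_of_nonneg_left h (by positivity)

/-- for every `p > 0`, every greedy cover `c'` and every cover `c`,
`M_p(c) ≤ (p+1)^{1/p} · M_p(c')`: greedy approximates maximum `p`-mean set cover
within a factor `(p+1)^{1/p}`. -/
theorem greedy_pMean_approx_const (p : ℝ) (hp : 0 < p)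
    (c' : Cover I) (hc' : c'.IsGreedy) (c : Cover I) :
    c.pMean p ≤ (p + 1) ^ (1 / p) * c'.pMean p :=
  Cover.pMean_le_of_sum_rpow_le hp (by linarith) (hc'.sum_rpow_a_le hp.le c)
end

section
/- Let G be a finite simple graph on n vertices with maximum degree Δ, and let φ' be a ρ-approximate MaxIS coloring of G with ρ = (Δ+2)/3. Then for every proper coloring φ of G, H(φ') ≤ H(φ) + log₂(Δ+2) − 0.14226. In other words, the minimum entropy coloring problem is approximated within an additive error of log₂(Δ+2) − 0.14226 on graphs with maximum degree Δ. -/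
open Finset

variable {V : Type*} [Fintype V] [DecidableEq V]

/-- A proper coloring of `G`: adjacent vertices receive different colors. -/
def IsProperColoring (G : SimpleGraph V) (φ : V → ℕ) : Prop :=
  ∀ v w : V, G.Adj v w → φ v ≠ φ w

/-- `c_i`: the size of the color class `i`. -/
def classSize (φ : V → ℕ) (i : ℕ) : ℕ :=
  (Finset.univ.filter fun w => φ w = i).card

/-- `a_v`: the size of the color class containing `v`. -/
def classOfSize (φ : V → ℕ) (v : V) : ℕ := classSize φ (φ v)

/-- The generalized `p`-mean of the values `a_v` of a coloring. -/
noncomputable def colPMean (φ : V → ℕ) (p : ℝ) : ℝ :=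
  ((1 / (Fintype.card V : ℝ)) * ∑ v : V, (classOfSize φ v : ℝ) ^ p) ^ (1 / p)

/-- An independent set of vertices. -/
def IsIndep (G : SimpleGraph V) (s : Finset V) : Prop :=
  ∀ v ∈ s, ∀ w ∈ s, v ≠ w → ¬G.Adj v w

/-- A `ρ`-approximate MaxIS coloring: a proper coloring whose color classes can be ordered
`P 0, …, P (m-1)` so that each `P j` is an independent set of the graph that remains after
removing the previous classes, of size at least `1/ρ` times the independence number of the
remaining graph. -/
def IsRhoApproxMaxISColoring (G : SimpleGraph V) (ρ : ℝ) (φ : V → ℕ) : Prop :=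
  IsProperColoring G φ ∧
  ∃ (m : ℕ) (P : ℕ → Finset V),
    (∀ v : V, ∃ j < m, v ∈ P j) ∧
    (∀ j < m,
      P j ⊆ Finset.univ \ (Finset.range j).biUnion P ∧
      IsIndep G (P j) ∧
      ∀ T : Finset V, T ⊆ Finset.univ \ (Finset.range j).biUnion P →
        IsIndep G T → (T.card : ℝ) ≤ ρ * (P j).card) ∧
    (∀ j < m, ∀ v ∈ P j, (Finset.univ.filter fun w => φ w = φ v) = P j)

/-- The entropy (in bits) of a proper coloring: the entropy of the distribution obtained by
dividing the sizes of the (nonempty) color classes by `n`. -/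
noncomputable def colEntropy (φ : V → ℕ) : ℝ :=
  -∑ i ∈ Finset.univ.image φ,
      ((classSize φ i : ℝ) / (Fintype.card V : ℝ)) *
        Real.logb 2 ((classSize φ i : ℝ) / (Fintype.card V : ℝ))

/-! Fix any proper coloring `φ` and let `j v` be the round in which the approximate MaxIS
coloring `φ'` colors `v`. Inside a color class `C` of `φ`, the vertices colored in round `j v`
or later form an independent set of the graph remaining at that round, so there are at most
`ρ · a'_v` of them. Ordering `C` by rounds, the product of these counts is at least `|C|!`,
hence at least `(|C|/e)^|C|`. Taking logarithms and summing over the classes gives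
`∑ log a_v ≤ ∑ log a'_v + n (1 + log ρ)`, that is `H(φ') ≤ H(φ) + log₂ (e ρ)`, and for
`ρ = (Δ+2)/3` one has `log₂ (e ρ) = log₂ (Δ+2) + log₂ e - log₂ 3 < log₂ (Δ+2) - 0.14226`.
-/

open Real

theorem Finset.factorial_card_le_prod_card_filter_le {α : Type*} [DecidableEq α]
    (g : α → ℕ) (s : Finset α) :
    (#s).factorial ≤ ∏ v ∈ s, #{u ∈ s | g v ≤ g u} := by
  induction s using strongInduction with
  | H s ih =>
    rcases s.eq_empty_or_nonempty with rfl | hs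
    · simp
    obtain ⟨v₀, hv₀, hmin⟩ := s.exists_min_image g hs
    have hfilter : {u ∈ s | g v₀ ≤ g u} = s := filter_true_of_mem hmin
    rw [← mul_prod_erase s _ hv₀, hfilter, ← card_erase_add_one hv₀,
      Nat.factorial_succ, card_erase_add_one hv₀]
    refine Nat.mul_le_mul_left _ ((ih _ (erase_ssubset hv₀)).trans ?_)
    exact prod_le_prod' fun v _ =>
      card_le_card (filter_subset_filter _ (erase_subset _ _))

theorem Real.pow_le_exp_mul_factorial (n : ℕ) : (n : ℝ) ^ n ≤ exp n * n.factorial := by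
  have h := pow_div_factorial_le_exp (n : ℝ) (Nat.cast_nonneg n) n
  rwa [div_le_iff₀ (by positivity)] at h

theorem Finset.card_mul_log_card_le_card_add_sum_log {α : Type*} [DecidableEq α]
    (s : Finset α) (g : α → ℕ) (f : α → ℝ)
    (hf : ∀ v ∈ s, (#{u ∈ s | g v ≤ g u} : ℝ) ≤ f v) :
    #s * log #s ≤ #s + ∑ v ∈ s, log (f v) := by
  have hf_pos : ∀ v ∈ s, 0 < f v := fun v hv =>
    lt_of_lt_of_le (by exact_mod_cast card_pos.mpr ⟨v, by simp [hv]⟩) (hf v hv)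
  have hpow : (#s : ℝ) ^ #s ≤ exp #s * ∏ v ∈ s, f v :=
    calc (#s : ℝ) ^ #s ≤ exp #s * (#s).factorial := pow_le_exp_mul_factorial _
      _ ≤ exp #s * ∏ v ∈ s, (#{u ∈ s | g v ≤ g u} : ℝ) := by
          gcongr
          exact_mod_cast factorial_card_le_prod_card_filter_le g s
      _ ≤ exp #s * ∏ v ∈ s, f v := by
          gcongr with v hv
          exact hf v hv
  rcases s.eq_empty_or_nonempty with rfl | hs
  · simp
  have hlog := log_le_log (by positivity) hpow
  rwa [log_pow, log_mul (exp_ne_zero _) (prod_pos hf_pos).ne',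
    log_exp, log_prod fun v hv => (hf_pos v hv).ne'] at hlog

theorem classOfSize_pos {V : Type*} [Fintype V] (φ : V → ℕ) (v : V) : 0 < classOfSize φ v :=
  card_pos.mpr ⟨v, by simp⟩

theorem sum_classOfSize_eq {V : Type*} [Fintype V] (φ : V → ℕ) (f : ℕ → ℝ) :
    ∑ v, f (classOfSize φ v) = ∑ i ∈ univ.image φ, classSize φ i * f (classSize φ i) := by
  rw [← sum_fiberwise_of_maps_to fun v _ => mem_image_of_mem φ (mem_univ v)]
  refine sum_congr rfl fun i _ => ?_
  rw [sum_congr rfl fun v hv => by rw [classOfSize, (mem_filter.mp hv).2],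
    sum_const, nsmul_eq_mul]
  rfl

theorem sum_classSize_eq_card {V : Type*} [Fintype V] (φ : V → ℕ) :
    ∑ i ∈ univ.image φ, (classSize φ i : ℝ) = Fintype.card V := by
  exact_mod_cast (card_eq_sum_card_image φ univ).symm

theorem colEntropy_eq_logb_card_sub {V : Type*} [Fintype V] (φ : V → ℕ) :
    colEntropy φ = logb 2 (Fintype.card V) -
      (∑ v, logb 2 (classOfSize φ v)) / Fintype.card V := by
  rcases isEmpty_or_nonempty V with hV | hV
  · simp [colEntropy]
  have hn : (Fintype.card V : ℝ) ≠ 0 := by positivity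
  have hterm : ∀ i ∈ univ.image φ,
      (classSize φ i / Fintype.card V : ℝ) * logb 2 (classSize φ i / Fintype.card V) =
        (classSize φ i * logb 2 (classSize φ i) -
          classSize φ i * logb 2 (Fintype.card V)) / Fintype.card V := by
    intro i hi
    obtain ⟨v, -, rfl⟩ := mem_image.mp hi
    rw [logb_div (by exact_mod_cast (classOfSize_pos φ v).ne') hn]
    ring
  rw [colEntropy, sum_congr rfl hterm, ← sum_div, sum_sub_distrib,
    ← sum_mul, sum_classSize_eq_card, sum_classOfSize_eq φ fun c => logb 2 c]
  field_simp
  ring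

theorem IsRhoApproxMaxISColoring.exists_round {G : SimpleGraph V} {ρ : ℝ} {φ' : V → ℕ}
    (hφ' : IsRhoApproxMaxISColoring G ρ φ') :
    ∃ j : V → ℕ, ∀ (v : V) (T : Finset V), IsIndep G T → (∀ u ∈ T, j v ≤ j u) →
      (#T : ℝ) ≤ ρ * classOfSize φ' v := by
  obtain ⟨-, m, P, hcover, hround, hclass⟩ := hφ'
  choose j hjm hjP using hcover
  refine ⟨j, fun v T hT hTj => ?_⟩
  have hsize : classOfSize φ' v = #(P (j v)) := by
    rw [classOfSize, classSize, hclass (j v) (hjm v) v (hjP v)]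
  rw [hsize]
  refine (hround (j v) (hjm v)).2.2 T (fun u hu => ?_) hT
  have hu_rem := (hround (j u) (hjm u)).1 (hjP u)
  simp only [mem_sdiff, mem_biUnion, mem_range, mem_univ, true_and,
    not_exists, not_and] at hu_rem ⊢
  exact fun k hk => hu_rem k (hk.trans_le (hTj u hu))

theorem sum_log_classOfSize_le {G : SimpleGraph V} {ρ : ℝ} {φ' φ : V → ℕ} (hρ : 0 < ρ)
    (hφ' : IsRhoApproxMaxISColoring G ρ φ') (hφ : IsProperColoring G φ) :
    ∑ v, log (classOfSize φ v) ≤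
      ∑ v, log (classOfSize φ' v) + Fintype.card V * (1 + log ρ) := by
  obtain ⟨j, hj⟩ := hφ'.exists_round
  have hclass : ∀ i ∈ univ.image φ, (classSize φ i : ℝ) * log (classSize φ i) ≤
      classSize φ i + ∑ v ∈ univ.filter (φ · = i), log (ρ * classOfSize φ' v) := by
    intro i _
    refine card_mul_log_card_le_card_add_sum_log _ j _ fun v _ =>
      hj v _ ?_ fun u hu => (mem_filter.mp hu).2
    intro x hx y hy _ hxy
    simp only [mem_filter, mem_univ, true_and] at hx hy
    exact hφ x y hxy (hx.1.trans hy.1.symm)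
  have hsplit : ∀ v, log (ρ * classOfSize φ' v) = log ρ + log (classOfSize φ' v) := fun v =>
    log_mul hρ.ne' (by exact_mod_cast (classOfSize_pos φ' v).ne')
  calc ∑ v, log (classOfSize φ v)
      = ∑ i ∈ univ.image φ, classSize φ i * log (classSize φ i) :=
        sum_classOfSize_eq φ fun c => log c
    _ ≤ ∑ i ∈ univ.image φ,
          (classSize φ i + ∑ v ∈ univ.filter (φ · = i), log (ρ * classOfSize φ' v)) :=
        sum_le_sum hclass
    _ = Fintype.card V + ∑ v, log (ρ * classOfSize φ' v) := by
        rw [sum_add_distrib, sum_classSize_eq_card,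
          sum_fiberwise_of_maps_to fun v _ => mem_image_of_mem φ (mem_univ v)]
    _ = _ := by
        simp only [hsplit, sum_add_distrib, sum_const, card_univ, nsmul_eq_mul]
        ring

theorem colEntropy_le_of_isRhoApproxMaxISColoring [Nonempty V] {G : SimpleGraph V} {ρ : ℝ}
    {φ' φ : V → ℕ} (hρ : 0 < ρ) (hφ' : IsRhoApproxMaxISColoring G ρ φ')
    (hφ : IsProperColoring G φ) :
    colEntropy φ' ≤ colEntropy φ + logb 2 (exp 1 * ρ) := by
  have hlogb : logb 2 (exp 1 * ρ) = (1 + log ρ) / log 2 := by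
    rw [logb, log_mul (exp_ne_zero 1) hρ.ne', log_exp]
  have hlog2 : 0 < log 2 := log_pos one_lt_two
  have hdiff : (∑ v, log (classOfSize φ v) - ∑ v, log (classOfSize φ' v)) /
      (log 2 * Fintype.card V) ≤ (1 + log ρ) / log 2 := by
    rw [div_le_div_iff₀ (by positivity) hlog2]
    have hsum := sum_log_classOfSize_le hρ hφ' hφ
    linarith [mul_le_mul_of_nonneg_right (sub_le_iff_le_add'.mpr hsum) hlog2.le]
  rw [colEntropy_eq_logb_card_sub, colEntropy_eq_logb_card_sub, hlogb]
  simp only [logb, ← sum_div, div_div]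
  rw [sub_div] at hdiff
  linarith

theorem logb_two_exp_one_sub_logb_two_three_lt : logb 2 (exp 1) - logb 2 3 < -0.14226 := by
  rw [logb, logb, log_exp, ← sub_div, div_lt_iff₀ (log_pos one_lt_two)]
  linarith [log_three_gt_d9, log_two_lt_d9]

/-- if `φ'` is a `ρ`-approximate MaxIS coloring of a graph of maximum degree `Δ`
with `ρ = (Δ+2)/3`, then for every proper coloring `φ`,
`H(φ') ≤ H(φ) + log₂(Δ+2) - 0.14226`. -/
theorem maxIS_entropy_maxDegree (G : SimpleGraph V) [DecidableRel G.Adj]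
    (φ' : V → ℕ)
    (hφ' : IsRhoApproxMaxISColoring G (((G.maxDegree : ℝ) + 2) / 3) φ')
    (φ : V → ℕ) (hφ : IsProperColoring G φ) :
    colEntropy φ' ≤ colEntropy φ + Real.logb 2 ((G.maxDegree : ℝ) + 2) - 0.14226 := by
  have hΔ : (2 : ℝ) ≤ G.maxDegree + 2 := by linarith [(G.maxDegree.cast_nonneg : (0 : ℝ) ≤ _)]
  rcases isEmpty_or_nonempty V with hV | hV
  · have hlogb : 1 ≤ logb 2 ((G.maxDegree : ℝ) + 2) :=
      (logb_self_eq_one one_lt_two).symm.trans_le (logb_le_logb_of_le one_lt_two two_pos hΔ)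
    simp only [colEntropy, univ_eq_empty, image_empty, sum_empty, neg_zero]
    linarith
  calc colEntropy φ' ≤ colEntropy φ + logb 2 (exp 1 * ((G.maxDegree + 2) / 3)) :=
        colEntropy_le_of_isRhoApproxMaxISColoring (by positivity) hφ' hφ
    _ = colEntropy φ + logb 2 (G.maxDegree + 2) + (logb 2 (exp 1) - logb 2 3) := by
        rw [logb_mul (exp_ne_zero 1) (by positivity), logb_div (by positivity) three_ne_zero]
        ring
    _ ≤ _ := by linarith [logb_two_exp_one_sub_logb_two_three_lt]
end
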